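/- arXiv:2408.15435 — 3 statements merged into one kernel-verified Lean document; each statement's English description precedes it below -/
import Mathlib

section
/- Let N, M, K be positive natural numbers, and let X ∈ ℂ^{N×K}, B ∈ ℂ^{N×M}, W ∈ ℂ^{M×K}. Then X = B·W if and only if there exist matrices U ∈ ℂ^{N×N} and V ∈ ℂ^{K×K} such that the (N+K+M)×(N+K+M) block matrix [[U, X, B], [Xᴴ, V, Wᴴ], [Bᴴ, W, I_M]] is positive semidefinite and Re(Tr(U − B·Bᴴ)) ≤ 0. -/
open Matrix
open scoped ComplexOrder

/-!
Taking the Schur complement of the identity block, the block matrix is positive semidefinite iff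
`[[U - B Bᴴ, X - B W], [(X - B W)ᴴ, V - Wᴴ W]]` is. A positive semidefinite matrix with
nonpositive trace vanishes, so `U = B Bᴴ`; a positive semidefinite block matrix whose upper-left
block vanishes has vanishing off-diagonal blocks, so `X = B W`. Conversely, for `X = B W` the
choice `U = B Bᴴ`, `V = Wᴴ W` makes the Schur complement zero.
-/

namespace Matrix

variable {m n p : Type*} {𝕜 : Type*} [RCLike 𝕜]

theorem fromBlocks_sub_fromRows_mul_conjTranspose [Fintype p] (U : Matrix m m 𝕜)
    (X : Matrix m n 𝕜) (V : Matrix n n 𝕜) (B : Matrix m p 𝕜) (W : Matrix p n 𝕜) :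
    fromBlocks U X Xᴴ V - fromRows B Wᴴ * (fromRows B Wᴴ)ᴴ =
      fromBlocks (U - B * Bᴴ) (X - B * W) (X - B * W)ᴴ (V - Wᴴ * W) := by
  rw [conjTranspose_fromRows_eq_fromCols_conjTranspose, fromRows_mul_fromCols,
    sub_eq_add_neg, fromBlocks_neg, fromBlocks_add]
  simp [conjTranspose_mul, sub_eq_add_neg]

theorem posSemidef_fromBlocks_one_iff [Fintype m] [Fintype n] [DecidableEq n]
    (A : Matrix m m 𝕜) (B : Matrix m n 𝕜) :
    (fromBlocks A B Bᴴ 1).PosSemidef ↔ (A - B * Bᴴ).PosSemidef := by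
  let _ : Invertible (1 : Matrix n n 𝕜) := invertibleOne
  simpa using PosDef.fromBlocks₂₂ A B PosDef.one (D := (1 : Matrix n n 𝕜))

theorem PosSemidef.eq_zero_of_re_trace_nonpos [Fintype m] {A : Matrix m m 𝕜}
    (hA : A.PosSemidef) (h : RCLike.re A.trace ≤ 0) : A = 0 := by
  obtain ⟨hre, him⟩ := RCLike.nonneg_iff.mp hA.trace_nonneg
  exact hA.trace_eq_zero_iff.mp (RCLike.ext (by simpa using h.antisymm hre) (by simpa using him))

theorem PosSemidef.eq_zero_of_fromBlocks_zero₁₁ [Fintype m] [Fintype n] {B : Matrix m n 𝕜}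
    {D : Matrix n n 𝕜} (h : (fromBlocks 0 B Bᴴ D).PosSemidef) : B = 0 := by
  suffices Bᴴ = 0 by simpa using congrArg (·ᴴ) this
  refine ext_iff_mulVec.mpr fun u => ?_
  have hu := (h.dotProduct_mulVec_zero_iff (u ⊕ᵥ 0)).mp <| by
    simp [fromBlocks_mulVec, Function.star_sumElim]
  simpa [fromBlocks_mulVec] using congrArg (· ∘ Sum.inr) hu

theorem posSemidef_fromBlocks_fromRows_fromCols_one_iff [Fintype m] [Fintype n] [Fintype p]
    [DecidableEq p] (U : Matrix m m 𝕜) (X : Matrix m n 𝕜) (V : Matrix n n 𝕜)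
    (B : Matrix m p 𝕜) (W : Matrix p n 𝕜) :
    (fromBlocks (fromBlocks U X Xᴴ V) (fromRows B Wᴴ) (fromCols Bᴴ W) 1).PosSemidef ↔
      (fromBlocks (U - B * Bᴴ) (X - B * W) (X - B * W)ᴴ (V - Wᴴ * W)).PosSemidef := by
  have hR : fromCols Bᴴ W = (fromRows B Wᴴ)ᴴ := by
    rw [conjTranspose_fromRows_eq_fromCols_conjTranspose, conjTranspose_conjTranspose]
  rw [hR, posSemidef_fromBlocks_one_iff, fromBlocks_sub_fromRows_mul_conjTranspose]

end Matrix

theorem stmt_0_general (N M K : ℕ)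
    (X : Matrix (Fin N) (Fin K) ℂ) (B : Matrix (Fin N) (Fin M) ℂ)
    (W : Matrix (Fin M) (Fin K) ℂ) :
    X = B * W ↔
      ∃ (U : Matrix (Fin N) (Fin N) ℂ) (V : Matrix (Fin K) (Fin K) ℂ),
        (Matrix.fromBlocks
            (Matrix.fromBlocks U X Xᴴ V)
            (Matrix.fromRows B Wᴴ)
            (Matrix.fromCols Bᴴ W)
            (1 : Matrix (Fin M) (Fin M) ℂ)).PosSemidef ∧
        (Matrix.trace (U - B * Bᴴ)).re ≤ 0 := by
  simp_rw [posSemidef_fromBlocks_fromRows_fromCols_one_iff]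
  constructor
  · rintro rfl
    exact ⟨B * Bᴴ, Wᴴ * W, by simpa using PosSemidef.zero, by simp⟩
  · rintro ⟨U, V, hS, htr⟩
    have hU : U - B * Bᴴ = 0 := (hS.submatrix Sum.inl).eq_zero_of_re_trace_nonpos htr
    rw [hU] at hS
    exact sub_eq_zero.mp hS.eq_zero_of_fromBlocks_zero₁₁

/-- Lemma 1 (factorization LMI equivalence, before using binarity of B):
`X = B * W` iff there exist `U`, `V` such that the block matrix
`[[U, X, B], [Xᴴ, V, Wᴴ], [Bᴴ, W, I_M]]` is positive semidefinite and
`Re (Tr (U - B * Bᴴ)) ≤ 0`. -/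
theorem stmt_0 (N M K : ℕ) (hN : 0 < N) (hM : 0 < M) (hK : 0 < K)
    (X : Matrix (Fin N) (Fin K) ℂ) (B : Matrix (Fin N) (Fin M) ℂ)
    (W : Matrix (Fin M) (Fin K) ℂ) :
    X = B * W ↔
      ∃ (U : Matrix (Fin N) (Fin N) ℂ) (V : Matrix (Fin K) (Fin K) ℂ),
        (Matrix.fromBlocks
            (Matrix.fromBlocks U X Xᴴ V)
            (Matrix.fromRows B Wᴴ)
            (Matrix.fromCols Bᴴ W)
            (1 : Matrix (Fin M) (Fin M) ℂ)).PosSemidef ∧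
        (Matrix.trace (U - B * Bᴴ)).re ≤ 0 :=
  stmt_0_general N M K X B W
end

section
/- Let N ≥ 1 and M ≥ 1, let D ∈ ℝ^{N×N} and D_min ∈ ℝ, and let b_1, …, b_M ∈ ℝ^N be vectors each of whose entries lies in {0,1} with exactly one entry equal to 1. Let b̄ ∈ ℝ^{MN} be the concatenation [b_1; …; b_M], for each m let Î_m = [0_{N×(m−1)N}, I_N, 0_{N×(M−m)N}] ∈ ℝ^{N×MN}, and set D_{m,m'} = Î_mᵀ · D · Î_{m'} ∈ ℝ^{MN×MN}. Then for every η ∈ ℝ and all indices m ≠ m' in {1,…,M}: b_mᵀ · D · b_{m'} ≥ D_min holds if and only if b̄ᵀ · (½(−D_{m,m'} − D_{m,m'}ᵀ) + η·I_{MN}) · b̄ − η·M + D_min ≤ 0. -/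
open Matrix

/-- `Î_m = [0_{N×(m−1)N}, I_N, 0_{N×(M−m)N}] ∈ ℝ^{N×MN}`, the selection matrix
extracting the `m`-th block of length `N`. -/
def Ihat (N M : ℕ) (m : Fin M) : Matrix (Fin N) (Fin M × Fin N) ℝ :=
  Matrix.of fun i p => if p.1 = m ∧ p.2 = i then 1 else 0

/-- `D_{m,m'} = Î_mᵀ · D · Î_{m'} ∈ ℝ^{MN×MN}`. -/
def Dmm (N M : ℕ) (D : Matrix (Fin N) (Fin N) ℝ) (m m' : Fin M) :
    Matrix (Fin M × Fin N) (Fin M × Fin N) ℝ :=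
  (Ihat N M m)ᵀ * D * Ihat N M m'

lemma Ihat_mulVec (N M : ℕ) (m : Fin M) (x : Fin M × Fin N → ℝ) :
    Ihat N M m *ᵥ x = fun i => x (m, i) := by
  funext i
  simp [Ihat, mulVec, dotProduct, Fintype.sum_prod_type, ite_and]

lemma quad_eq (N M : ℕ) (D : Matrix (Fin N) (Fin N) ℝ) (m m' : Fin M)
    (b : Fin M → Fin N → ℝ) :
    (fun p : Fin M × Fin N => b p.1 p.2) ⬝ᵥ
      (Dmm N M D m m' *ᵥ (fun p : Fin M × Fin N => b p.1 p.2)) =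
      b m ⬝ᵥ (D *ᵥ b m') := by
  set x : Fin M × Fin N → ℝ := fun p => b p.1 p.2
  have h1 : Dmm N M D m m' *ᵥ x = (Ihat N M m)ᵀ *ᵥ (D *ᵥ (Ihat N M m' *ᵥ x)) := by
    simp [Dmm, mulVec_mulVec, Matrix.mul_assoc]
  rw [h1, Ihat_mulVec, Matrix.dotProduct_mulVec, Matrix.vecMul_transpose, Ihat_mulVec]

/-- Lemma 2 of the paper: for one-hot binary vectors `b_1, …, b_M` and their
concatenation `b̄`, and for every `η ∈ ℝ` and `m ≠ m'`,
`b_mᵀ·D·b_{m'} ≥ D_min` iff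
`b̄ᵀ·(½(−D_{m,m'} − D_{m,m'}ᵀ) + η·I_{MN})·b̄ − η·M + D_min ≤ 0`. -/
theorem stmt_5 (N M : ℕ) (hN : 1 ≤ N) (hM : 1 ≤ M)
    (D : Matrix (Fin N) (Fin N) ℝ) (Dmin : ℝ)
    (b : Fin M → Fin N → ℝ)
    (hbin : ∀ m n, b m n = 0 ∨ b m n = 1)
    (hone : ∀ m, ∃! n, b m n = 1)
    (η : ℝ) (m m' : Fin M) (hmm : m ≠ m') :
    b m ⬝ᵥ (D *ᵥ b m') ≥ Dmin ↔
      (fun p : Fin M × Fin N => b p.1 p.2) ⬝ᵥ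
          ((((1 / 2 : ℝ) • (-(Dmm N M D m m') - (Dmm N M D m m')ᵀ) +
              η • (1 : Matrix (Fin M × Fin N) (Fin M × Fin N) ℝ))) *ᵥ
            (fun p : Fin M × Fin N => b p.1 p.2)) - η * (M : ℝ) + Dmin ≤ 0 := by
  set x : Fin M × Fin N → ℝ := fun p => b p.1 p.2 with hx
  have hxx : x ⬝ᵥ x = (M : ℝ) := by
    have hcol : ∀ m, ∑ n, b m n * b m n = 1 := by
      intro m
      obtain ⟨n₀, hn₀, huniq⟩ := hone m
      rw [Finset.sum_eq_single n₀]
      · rw [hn₀]; ring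
      · intro n _ hn
        rcases hbin m n with h | h
        · rw [h]; ring
        · exact absurd (huniq n h) hn
      · simp
    simp only [dotProduct, hx]
    rw [Fintype.sum_prod_type]
    simp [hcol]
  have hT : x ⬝ᵥ ((Dmm N M D m m')ᵀ *ᵥ x) = x ⬝ᵥ (Dmm N M D m m' *ᵥ x) := by
    rw [Matrix.dotProduct_mulVec, Matrix.vecMul_transpose, dotProduct_comm]
  have hq := quad_eq N M D m m' b
  rw [add_mulVec, dotProduct_add, smul_mulVec, dotProduct_smul,
    sub_mulVec, neg_mulVec, dotProduct_sub, dotProduct_neg, smul_mulVec,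
    dotProduct_smul, one_mulVec, hT, hq, hxx]
  simp only [smul_eq_mul]
  constructor <;> intro h <;> linarith
end

section
/- Let n ≥ 1, let A ∈ ℂ^{n×n} be Hermitian, let a ∈ ℂ^n, let α ∈ ℝ, and let ε > 0. If Re(xᴴAx) + 2·Re(aᴴx) + α ≤ 0 for every x ∈ ℂ^n with ‖x‖² ≤ ε², then there exists a real number λ ≥ 0 such that the (n+1)×(n+1) Hermitian matrix λ·[[I_n, 0], [0, −ε²]] − [[A, a], [aᴴ, α]] is positive semidefinite. -/
/-!
Homogenize: on `ℂⁿ⁺¹` let `P` be the form of `[[A, a], [aᴴ, α]]` and `Q` that of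
`[[I, 0], [0, -ε²]]`. Dehomogenizing `(x, t) ↦ x / t` turns the hypothesis into
`Q v < 0 → P v ≤ 0`, and `(0, 1)` is a strictly feasible point. The joint range
`{(P v, Q v)}` of two Hermitian forms is a convex cone (Toeplitz–Hausdorff): for `v`, `w`,
a phase `z` can be chosen so that the cross term of `v + z w` is a nonnegative multiple of
`(P v + P w, Q v + Q w)`. This cone misses the open quadrant `{x > 0, y < 0}`, so a line
through the origin separates them, and its slope is the multiplier `λ`.
-/

open Matrix
open scoped ComplexOrder

/-- The `(n+1)×(n+1)` Hermitian block matrix `[[A, a], [aᴴ, α]]`. -/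
noncomputable def sBlock {n : ℕ} (A : Matrix (Fin n) (Fin n) ℂ) (a : Fin n → ℂ) (α : ℝ) :
    Matrix (Fin n ⊕ Fin 1) (Fin n ⊕ Fin 1) ℂ :=
  Matrix.fromBlocks A (Matrix.of fun i _ => a i) (Matrix.of fun _ j => star (a j))
    (Matrix.of fun _ _ => (α : ℂ))

lemma Complex.exists_norm_eq_one_re_mul_eq_zero (γ δ : ℂ) :
    ∃ z : ℂ, ‖z‖ = 1 ∧ (z * γ).re = 0 ∧ 0 ≤ (z * δ).re := by
  obtain ⟨z, hz, hzγ⟩ : ∃ z : ℂ, ‖z‖ = 1 ∧ (z * γ).re = 0 := by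
    rcases eq_or_ne γ 0 with rfl | hγ
    · exact ⟨1, by simp, by simp⟩
    · refine ⟨I * (‖γ‖ / γ), by simp [hγ], ?_⟩
      rw [mul_assoc, div_mul_cancel₀ _ hγ]
      simp
  rcases le_total 0 (z * δ).re with h | h
  · exact ⟨z, hz, hzγ, h⟩
  · exact ⟨-z, by simpa using hz, by rw [neg_mul, Complex.neg_re, hzγ, neg_zero],
      by simpa using h⟩

theorem exists_nonneg_fst_le_mul_snd {K : Set (ℝ × ℝ)} (hK : Convex ℝ K)
    (hsmul : ∀ k ∈ K, ∀ r : ℝ, 0 ≤ r → r • k ∈ K) (hdisj : ∀ k ∈ K, k.2 < 0 → k.1 ≤ 0)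
    {k₀ : ℝ × ℝ} (hk₀ : k₀ ∈ K) (hk₀' : k₀.2 < 0) :
    ∃ l : ℝ, 0 ≤ l ∧ ∀ k ∈ K, k.1 ≤ l * k.2 := by
  have hC : Convex ℝ (Set.Ioi (0 : ℝ) ×ˢ Set.Iio (0 : ℝ)) := (convex_Ioi 0).prod (convex_Iio 0)
  have hCK : Disjoint (Set.Ioi (0 : ℝ) ×ˢ Set.Iio (0 : ℝ)) K :=
    Set.disjoint_left.2 fun k ⟨h1, h2⟩ hk => (hdisj k hk h2).not_gt h1
  obtain ⟨f, u, hfC, hfK⟩ := geometric_hahn_banach_open hC (isOpen_Ioi.prod isOpen_Iio) hK hCK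
  set μ := f (1, 0)
  set ν := f (0, 1)
  have hf : ∀ x y : ℝ, f (x, y) = x * μ + y * ν := fun x y => by
    rw [show ((x, y) : ℝ × ℝ) = x • (1, 0) + y • (0, 1) by simp, map_add, map_smul, map_smul,
      smul_eq_mul, smul_eq_mul]
  have hu : u ≤ 0 := by simpa using hfK _ (hsmul k₀ hk₀ 0 le_rfl)
  have hfK' : ∀ k ∈ K, 0 ≤ f k := fun k hk => by
    by_contra! hneg
    have := hfK _ (hsmul k hk ((u - 1) / f k) (div_nonneg_of_nonpos (by linarith) hneg.le))
    rw [map_smul, smul_eq_mul, div_mul_cancel₀ _ hneg.ne] at this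
    linarith
  have hfC' : ∀ x y : ℝ, 0 < x → y < 0 → x * μ + y * ν < 0 := fun x y hx hy => by
    linarith [hf x y ▸ hfC (x, y) ⟨hx, hy⟩]
  have hμ : μ < 0 := by
    by_contra! hμ
    have h₀ := hf k₀.1 k₀.2 ▸ hfK' k₀ hk₀
    have := hdisj k₀ hk₀ hk₀'
    have := hfC' 1 (-1) one_pos (by norm_num)
    nlinarith
  have hν : 0 ≤ ν := by
    by_contra! hν
    have := hfC' (ν / μ) (-1) (div_pos_of_neg_of_neg hν hμ) (by norm_num)
    rw [div_mul_cancel₀ _ hμ.ne] at this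
    linarith
  refine ⟨ν / -μ, div_nonneg hν (by linarith), fun k hk => ?_⟩
  rw [div_mul_eq_mul_div, le_div_iff₀ (by linarith)]
  linarith [hf k.1 k.2 ▸ hfK' k hk]

section HermitianForm

variable {ι : Type*} [Fintype ι]

noncomputable def hermForm (P : Matrix ι ι ℂ) (v : ι → ℂ) : ℝ := (star v ⬝ᵥ (P *ᵥ v)).re

lemma hermForm_smul (P : Matrix ι ι ℂ) (z : ℂ) (v : ι → ℂ) :
    hermForm P (z • v) = ‖z‖ ^ 2 * hermForm P v := by
  simp only [hermForm, star_smul, mulVec_smul, dotProduct_smul, smul_dotProduct, smul_eq_mul,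
    ← mul_assoc, Complex.star_def, Complex.mul_conj', ← Complex.ofReal_pow, Complex.re_ofReal_mul]

lemma hermForm_add_smul {P : Matrix ι ι ℂ} (hP : P.IsHermitian) (v w : ι → ℂ) (z : ℂ) :
    hermForm P (v + z • w) =
      hermForm P v + ‖z‖ ^ 2 * hermForm P w + 2 * (z * (star v ⬝ᵥ (P *ᵥ w))).re := by
  have hswap : star (star v ⬝ᵥ (P *ᵥ w)) = star w ⬝ᵥ (P *ᵥ v) := by
    rw [star_dotProduct, star_star, star_mulVec, dotProduct_mulVec, hP.eq, dotProduct_comm]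
  rw [← hermForm_smul]
  simp only [hermForm, star_add, mulVec_add, dotProduct_add, add_dotProduct, star_smul,
    smul_dotProduct, ← hswap, mulVec_smul, dotProduct_smul, smul_eq_mul, Complex.add_re,
    Complex.star_def, ← map_mul, Complex.conj_re]
  rw [mul_add, Complex.add_re]
  ring

lemma hermForm_one [DecidableEq ι] (v : ι → ℂ) : hermForm 1 v = ∑ i, ‖v i‖ ^ 2 := by
  simp only [hermForm, one_mulVec, dotProduct, Complex.re_sum, Pi.star_apply, Complex.star_def,
    Complex.conj_mul', ← Complex.ofReal_pow, Complex.ofReal_re]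

lemma hermForm_smul_sub (P Q : Matrix ι ι ℂ) (l : ℝ) (v : ι → ℂ) :
    hermForm ((l : ℂ) • Q - P) v = l * hermForm Q v - hermForm P v := by
  simp only [hermForm, sub_mulVec, smul_mulVec, dotProduct_sub, dotProduct_smul,
    smul_eq_mul, Complex.sub_re, Complex.re_ofReal_mul]

lemma posSemidef_of_hermForm_nonneg {M : Matrix ι ι ℂ} (hM : M.IsHermitian)
    (h : ∀ v, 0 ≤ hermForm M v) : M.PosSemidef :=
  .of_dotProduct_mulVec_nonneg hM fun v =>
    Complex.nonneg_iff.2 ⟨h v, (hM.im_star_dotProduct_mulVec_self v).symm⟩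

noncomputable def jointForm (P Q : Matrix ι ι ℂ) (v : ι → ℂ) : ℝ × ℝ :=
  (hermForm P v, hermForm Q v)

lemma jointForm_smul (P Q : Matrix ι ι ℂ) (z : ℂ) (v : ι → ℂ) :
    jointForm P Q (z • v) = ‖z‖ ^ 2 • jointForm P Q v := by
  simp [jointForm, hermForm_smul]

lemma smul_mem_range_jointForm {P Q : Matrix ι ι ℂ} {k : ℝ × ℝ}
    (hk : k ∈ Set.range (jointForm P Q)) {r : ℝ} (hr : 0 ≤ r) :
    r • k ∈ Set.range (jointForm P Q) := by
  obtain ⟨v, rfl⟩ := hk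
  exact ⟨(√r : ℂ) • v, by rw [jointForm_smul, Complex.norm_real, Real.norm_eq_abs, sq_abs,
    Real.sq_sqrt hr]⟩

/-- Rotating `w` by a phase makes the cross term of `jointForm P Q (v + z • w)` a nonnegative
multiple of `jointForm P Q v + jointForm P Q w`; rescaling then hits that sum exactly. -/
lemma add_mem_range_jointForm {P Q : Matrix ι ι ℂ} (hP : P.IsHermitian) (hQ : Q.IsHermitian)
    (v w : ι → ℂ) : jointForm P Q v + jointForm P Q w ∈ Set.range (jointForm P Q) := by
  set m₁ := hermForm P v + hermForm P w
  set m₂ := hermForm Q v + hermForm Q w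
  have hm : jointForm P Q v + jointForm P Q w = (m₁, m₂) := rfl
  rw [hm]
  by_cases h0 : m₁ = 0 ∧ m₂ = 0
  · exact ⟨0, by simp [h0, jointForm, hermForm]⟩
  have hD : 0 < m₁ ^ 2 + m₂ ^ 2 := by rcases not_and_or.1 h0 with h | h <;> positivity
  set bP := star v ⬝ᵥ (P *ᵥ w)
  set bQ := star v ⬝ᵥ (Q *ᵥ w)
  obtain ⟨z, hz, hdet, hdot⟩ := Complex.exists_norm_eq_one_re_mul_eq_zero
    (bP * m₂ - bQ * m₁) (bP * m₁ + bQ * m₂)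
  set e₁ := (z * bP).re
  set e₂ := (z * bQ).re
  replace hdet : e₁ * m₂ - e₂ * m₁ = 0 := by
    rwa [mul_sub, ← mul_assoc, ← mul_assoc, Complex.sub_re, Complex.re_mul_ofReal,
      Complex.re_mul_ofReal] at hdet
  replace hdot : 0 ≤ e₁ * m₁ + e₂ * m₂ := by
    rwa [mul_add, ← mul_assoc, ← mul_assoc, Complex.add_re, Complex.re_mul_ofReal,
      Complex.re_mul_ofReal] at hdot
  set κ := (e₁ * m₁ + e₂ * m₂) / (m₁ ^ 2 + m₂ ^ 2)
  have hκ₁ : κ * m₁ = e₁ := by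
    rw [div_mul_eq_mul_div, div_eq_iff hD.ne']
    linear_combination (-m₂) * hdet
  have hκ₂ : κ * m₂ = e₂ := by
    rw [div_mul_eq_mul_div, div_eq_iff hD.ne']
    linear_combination m₁ * hdet
  have hsum : jointForm P Q (v + z • w) = (1 + 2 * κ) • (m₁, m₂) := by
    simp only [jointForm, hermForm_add_smul hP, hermForm_add_smul hQ, hz, one_pow, one_mul,
      Prod.smul_mk, smul_eq_mul]
    ext
    · linear_combination (-2) * hκ₁
    · linear_combination (-2) * hκ₂
  have hκ : 0 < 1 + 2 * κ := by positivity
  have := smul_mem_range_jointForm ⟨_, hsum⟩ (inv_nonneg.2 hκ.le)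
  rwa [smul_smul, inv_mul_cancel₀ hκ.ne', one_smul] at this

theorem convex_range_jointForm {P Q : Matrix ι ι ℂ} (hP : P.IsHermitian) (hQ : Q.IsHermitian) :
    Convex ℝ (Set.range (jointForm P Q)) := by
  rintro _ hk _ hl s t hs ht -
  obtain ⟨v, hv⟩ := smul_mem_range_jointForm hk hs
  obtain ⟨w, hw⟩ := smul_mem_range_jointForm hl ht
  rw [← hv, ← hw]
  exact add_mem_range_jointForm hP hQ v w

/-- The S-lemma for Hermitian forms. -/
theorem exists_nonneg_hermForm_le_mul_hermForm {P Q : Matrix ι ι ℂ}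
    (hP : P.IsHermitian) (hQ : Q.IsHermitian) (h : ∀ v, hermForm Q v < 0 → hermForm P v ≤ 0)
    {v₀ : ι → ℂ} (hv₀ : hermForm Q v₀ < 0) :
    ∃ l : ℝ, 0 ≤ l ∧ ∀ v, hermForm P v ≤ l * hermForm Q v := by
  obtain ⟨l, hl, hle⟩ := exists_nonneg_fst_le_mul_snd (convex_range_jointForm hP hQ)
    (fun _ hk _ hr => smul_mem_range_jointForm hk hr) (by rintro _ ⟨v, rfl⟩; exact h v)
    (Set.mem_range_self v₀) hv₀
  exact ⟨l, hl, fun v => hle _ (Set.mem_range_self v)⟩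

end HermitianForm

section Block

variable {n : ℕ}

lemma sBlock_isHermitian {A : Matrix (Fin n) (Fin n) ℂ} (hA : A.IsHermitian)
    (a : Fin n → ℂ) (α : ℝ) : (sBlock A a α).IsHermitian :=
  hA.fromBlocks (by ext; simp) (by ext; simp)

lemma hermForm_sBlock (A : Matrix (Fin n) (Fin n) ℂ) (a : Fin n → ℂ) (α : ℝ)
    (x : Fin n → ℂ) (t : ℂ) :
    hermForm (sBlock A a α) (Sum.elim x fun _ => t) =
      hermForm A x + 2 * (star t * (star a ⬝ᵥ x)).re + α * ‖t‖ ^ 2 := by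
  have hcross : (star x ⬝ᵥ (t • a)).re = (star t * (star a ⬝ᵥ x)).re := by
    rw [← Complex.conj_re, dotProduct_smul, smul_eq_mul, map_mul, star_dotProduct (v := a)]
    rfl
  have hstar : star (Sum.elim x fun (_ : Fin 1) => t) = Sum.elim (star x) fun _ => star t := by
    ext (i | j) <;> rfl
  simp only [hermForm, sBlock, fromBlocks_mulVec, Sum.elim_comp_inl, Sum.elim_comp_inr, hstar,
    sumElim_dotProduct_sumElim]
  have hB : (of fun i (_ : Fin 1) => a i) *ᵥ (fun _ => t) = t • a := by
    ext i; simp [mulVec, dotProduct, mul_comm]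
  have hC : (of fun (_ : Fin 1) j => star (a j)) *ᵥ x = fun _ => star a ⬝ᵥ x := by
    ext; simp [mulVec, dotProduct]
  have hD : (of fun (_ : Fin 1) (_ : Fin 1) => (α : ℂ)) *ᵥ (fun _ => t) = fun _ => α * t := by
    ext; simp [mulVec, dotProduct]
  have hE : ∀ f : Fin 1 → ℂ, (fun _ => star t) ⬝ᵥ f = star t * f 0 := fun f => by
    simp [dotProduct]
  rw [hB, hC, hD, dotProduct_add, Complex.add_re, Complex.add_re, hcross, hE, Pi.add_apply,
    mul_add, Complex.add_re, mul_left_comm, Complex.star_def, Complex.conj_mul',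
    ← Complex.ofReal_pow, ← Complex.ofReal_mul, Complex.ofReal_re]
  ring

lemma hermForm_sBlock_smul (A : Matrix (Fin n) (Fin n) ℂ) (a : Fin n → ℂ) (α : ℝ)
    (y : Fin n → ℂ) (t : ℂ) :
    hermForm (sBlock A a α) (Sum.elim (t • y) fun _ => t) =
      ‖t‖ ^ 2 * (hermForm A y + 2 * (star a ⬝ᵥ y).re + α) := by
  rw [hermForm_sBlock, hermForm_smul, dotProduct_smul, smul_eq_mul, ← mul_assoc,
    Complex.star_def, Complex.conj_mul', ← Complex.ofReal_pow, Complex.re_ofReal_mul]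
  ring

/-- On `{(x, t) : ‖x‖² < ε² |t|²}` we have `t ≠ 0`, and `x / t` lies in the ball. -/
lemma hermForm_sBlock_nonpos_of_ball {A : Matrix (Fin n) (Fin n) ℂ} {a : Fin n → ℂ}
    {α ε : ℝ} (hfeas : ∀ x : Fin n → ℂ, (∑ i, ‖x i‖ ^ 2) ≤ ε ^ 2 →
      hermForm A x + 2 * (star a ⬝ᵥ x).re + α ≤ 0)
    (v : Fin n ⊕ Fin 1 → ℂ) (hv : hermForm (sBlock 1 0 (-(ε ^ 2))) v < 0) :
    hermForm (sBlock A a α) v ≤ 0 := by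
  obtain ⟨x, t, rfl⟩ : ∃ x t, v = Sum.elim x fun _ => t :=
    ⟨v ∘ Sum.inl, v (Sum.inr 0), by
      ext (i | j)
      · rfl
      · rw [Fin.fin_one_eq_zero j]; rfl⟩
  have ht : t ≠ 0 := by
    rintro rfl
    rw [hermForm_sBlock, hermForm_one] at hv
    simp only [star_zero, zero_mul, Complex.zero_re, mul_zero, add_zero, norm_zero,
      ne_eq, OfNat.ofNat_ne_zero, not_false_eq_true, zero_pow] at hv
    exact hv.not_ge (by positivity)
  obtain ⟨y, rfl⟩ : ∃ y, x = t • y := ⟨t⁻¹ • x, by rw [smul_smul, mul_inv_cancel₀ ht, one_smul]⟩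
  rw [hermForm_sBlock_smul] at hv ⊢
  refine mul_nonpos_of_nonneg_of_nonpos (by positivity) (hfeas y ?_)
  have := neg_of_mul_neg_right hv (by positivity)
  simp only [hermForm_one, star_zero, zero_dotProduct, Complex.zero_re, mul_zero, add_zero] at this
  linarith

end Block

theorem stmt_9_general (n : ℕ)
    (A : Matrix (Fin n) (Fin n) ℂ) (hA : A.IsHermitian) (a : Fin n → ℂ) (α : ℝ)
    (ε : ℝ) (hε : 0 < ε)
    (hfeas : ∀ x : Fin n → ℂ, (∑ i, ‖x i‖ ^ 2) ≤ ε ^ 2 →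
      (star x ⬝ᵥ (A *ᵥ x)).re + 2 * (star a ⬝ᵥ x).re + α ≤ 0) :
    ∃ l : ℝ, 0 ≤ l ∧
      ((l : ℂ) • sBlock (1 : Matrix (Fin n) (Fin n) ℂ) 0 (-(ε ^ 2))
        - sBlock A a α).PosSemidef := by
  have hQ := sBlock_isHermitian isHermitian_one (0 : Fin n → ℂ) (-(ε ^ 2))
  have hP := sBlock_isHermitian hA a α
  have hv₀ : hermForm (sBlock 1 0 (-(ε ^ 2))) (Sum.elim (0 : Fin n → ℂ) fun _ => 1) < 0 := by
    rw [hermForm_sBlock]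
    simpa [hermForm] using pow_pos hε 2
  obtain ⟨l, hl, hle⟩ := exists_nonneg_hermForm_le_mul_hermForm hP hQ
    (hermForm_sBlock_nonpos_of_ball hfeas) hv₀
  refine ⟨l, hl, posSemidef_of_hermForm_nonneg ((hQ.smul (Complex.conj_ofReal l)).sub hP)
    fun v => ?_⟩
  rw [hermForm_smul_sub]
  linarith [hle v]

/-- Necessity direction of the S-Lemma (Lemma 4 of the paper) for a single norm-ball
constraint: if `Re(xᴴAx) + 2·Re(aᴴx) + α ≤ 0` for every `x` with `‖x‖² ≤ ε²` (where
`ε > 0`), then there exists `λ ≥ 0` with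
`λ·[[I_n, 0], [0, −ε²]] − [[A, a], [aᴴ, α]] ⪰ 0`. -/
theorem stmt_9 (n : ℕ) (hn : 1 ≤ n)
    (A : Matrix (Fin n) (Fin n) ℂ) (hA : A.IsHermitian) (a : Fin n → ℂ) (α : ℝ)
    (ε : ℝ) (hε : 0 < ε)
    (hfeas : ∀ x : Fin n → ℂ, (∑ i, ‖x i‖ ^ 2) ≤ ε ^ 2 →
      (star x ⬝ᵥ (A *ᵥ x)).re + 2 * (star a ⬝ᵥ x).re + α ≤ 0) :
    ∃ l : ℝ, 0 ≤ l ∧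
      ((l : ℂ) • sBlock (1 : Matrix (Fin n) (Fin n) ℂ) 0 (-(ε ^ 2))
        - sBlock A a α).PosSemidef :=
  stmt_9_general n A hA a α ε hε hfeas
end
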